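/- arXiv:2204.09926 — 2 statements merged into one kernel-verified Lean document; each statement's English description precedes it below -/
import Mathlib

section
/- Let X be a directed space and LX = {↓F : F a nonempty finite subset of X} with the topology O_{⇒L}(LX) of ⇒_L-convergence open sets. Then the specialization order of the space (LX, O_{⇒L}(LX)) coincides with set inclusion: ↓F₁ ⊑ ↓F₂ iff ↓F₁ ⊆ ↓F₂. -/
/-!
The constant family `{B}` is `⇒_L`-convergent to every `A ⊆ B` in `LX` (each point of `A` is the
limit of a singleton net inside `B`), so `⇒_L`-open sets are upward closed under inclusion.
Conversely, `B` is a finite union of point closures, hence closed in `X`; for `U = Bᶜ` the members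
of `LX` meeting `U` form a `⇒_L`-open set, because a net converging to a point of `U` eventually
lies in `U`. It contains `A` whenever `A ⊄ B`, but never `B`.
-/

variable {X : Type*}

/-- The specialization order: `x ⊑ y` iff `x ∈ closure {y}`. -/
def sle [TopologicalSpace X] (x y : X) : Prop := x ∈ closure {y}

/-- A directed subset with respect to the specialization order. -/
def IsDirSet [TopologicalSpace X] (D : Set X) : Prop :=
  D.Nonempty ∧ ∀ a ∈ D, ∀ b ∈ D, ∃ c ∈ D, sle a c ∧ sle b c

/-- `DConv D x`: the directed set `D`, viewed as a net (indexed by itself with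
the specialization order), converges to `x`. -/
def DConv [TopologicalSpace X] (D : Set X) (x : X) : Prop :=
  IsDirSet D ∧ ∀ U : Set X, IsOpen U → x ∈ U → ∃ d ∈ D, ∀ e ∈ D, sle d e → e ∈ U

/-- Directed open set. -/
def DOpen [TopologicalSpace X] (U : Set X) : Prop :=
  ∀ D : Set X, ∀ x : X, DConv D x → x ∈ U → (D ∩ U).Nonempty

/-- A directed space: every directed open set is open. -/
def IsDirectedSpace (X : Type*) [TopologicalSpace X] : Prop :=
  ∀ U : Set X, DOpen U → IsOpen U

/-- Down-closure with respect to the specialization order. -/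
def dcl [TopologicalSpace X] (F : Set X) : Set X := {x | ∃ a ∈ F, sle x a}

/-- Membership in `LX`: down-closures of nonempty finite sets. -/
def InLX [TopologicalSpace X] (A : Set X) : Prop :=
  ∃ F : Finset X, F.Nonempty ∧ A = dcl (F : Set X)

/-- A directed (under inclusion) family of elements of `LX`. -/
def LDir [TopologicalSpace X] (𝒟 : Set (Set X)) : Prop :=
  (∀ B ∈ 𝒟, InLX B) ∧ 𝒟.Nonempty ∧ ∀ A ∈ 𝒟, ∀ B ∈ 𝒟, ∃ C ∈ 𝒟, A ⊆ C ∧ B ⊆ C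

/-- The convergence `𝒟 ⇒_L ↓F`. -/
def LConv [TopologicalSpace X] (𝒟 : Set (Set X)) (A : Set X) : Prop :=
  LDir 𝒟 ∧ ∃ F : Finset X, F.Nonempty ∧ A = dcl (F : Set X) ∧
    ∀ a ∈ F, ∃ D : Set X, D ⊆ ⋃₀ 𝒟 ∧ DConv D a

/-- `⇒_L`-convergence open subsets of `LX`. -/
def LOpen [TopologicalSpace X] (𝒰 : Set (Set X)) : Prop :=
  (∀ A ∈ 𝒰, InLX A) ∧ ∀ 𝒟 A, LConv 𝒟 A → A ∈ 𝒰 → (𝒟 ∩ 𝒰).Nonempty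


section

variable [TopologicalSpace X]

lemma sle_iff_specializes {x y : X} : sle x y ↔ y ⤳ x :=
  specializes_iff_mem_closure.symm

lemma sle_refl (x : X) : sle x x :=
  sle_iff_specializes.2 (specializes_refl x)

lemma dcl_eq_biUnion_closure (F : Set X) : dcl F = ⋃ a ∈ F, closure {a} := by
  ext x
  simp [dcl, sle]

lemma InLX.isClosed {A : Set X} (hA : InLX A) : IsClosed A := by
  obtain ⟨F, -, rfl⟩ := hA
  rw [dcl_eq_biUnion_closure]
  exact F.finite_toSet.isClosed_biUnion fun _ _ => isClosed_closure

lemma dConv_singleton (a : X) : DConv {a} a := by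
  refine ⟨⟨⟨a, rfl⟩, ?_⟩, fun U _ haU => ⟨a, rfl, ?_⟩⟩
  · rintro _ rfl _ rfl
    exact ⟨_, rfl, sle_refl _, sle_refl _⟩
  · rintro _ rfl -
    exact haU

lemma lDir_singleton {B : Set X} (hB : InLX B) : LDir {B} := by
  refine ⟨fun C hC => hC ▸ hB, ⟨B, rfl⟩, ?_⟩
  rintro _ rfl _ rfl
  exact ⟨_, rfl, subset_rfl, subset_rfl⟩

lemma lConv_singleton_of_subset {A B : Set X} (hA : InLX A) (hB : InLX B) (hAB : A ⊆ B) :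
    LConv {B} A := by
  obtain ⟨F, hFne, rfl⟩ := hA
  refine ⟨lDir_singleton hB, F, hFne, rfl, fun a ha => ⟨{a}, ?_, dConv_singleton a⟩⟩
  rintro _ rfl
  exact ⟨B, rfl, hAB ⟨_, ha, sle_refl _⟩⟩

lemma LOpen.mem_of_subset {𝒰 : Set (Set X)} (h𝒰 : LOpen 𝒰) {A B : Set X} (hA : InLX A)
    (hB : InLX B) (hAB : A ⊆ B) (hA𝒰 : A ∈ 𝒰) : B ∈ 𝒰 := by
  obtain ⟨C, rfl, hC𝒰⟩ := h𝒰.2 {B} A (lConv_singleton_of_subset hA hB hAB) hA𝒰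
  exact hC𝒰

lemma DConv.exists_mem_of_isOpen {D : Set X} {x : X} (hD : DConv D x) {U : Set X}
    (hU : IsOpen U) (hxU : x ∈ U) : ∃ d ∈ D, d ∈ U := by
  obtain ⟨d, hdD, hd⟩ := hD.2 U hU hxU
  exact ⟨d, hdD, hd d hdD (sle_refl d)⟩

lemma lOpen_setOf_inter_nonempty {U : Set X} (hU : IsOpen U) :
    LOpen {C | InLX C ∧ (C ∩ U).Nonempty} := by
  refine ⟨fun C hC => hC.1, ?_⟩
  rintro 𝒟 C ⟨h𝒟, F, -, rfl, hconv⟩ ⟨-, c, ⟨f, hfF, hcf⟩, hcU⟩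
  have hfU : f ∈ U := (sle_iff_specializes.1 hcf).mem_open hU hcU
  obtain ⟨D, hD𝒟, hDf⟩ := hconv f hfF
  obtain ⟨d, hdD, hdU⟩ := hDf.exists_mem_of_isOpen hU hfU
  obtain ⟨E, hE𝒟, hdE⟩ := hD𝒟 hdD
  exact ⟨E, hE𝒟, h𝒟.1 E hE𝒟, d, hdE, hdU⟩

end

theorem stmt_9_general [TopologicalSpace X]
    (A B : Set X) (hA : InLX A) (hB : InLX B) :
    (∀ 𝒰 : Set (Set X), LOpen 𝒰 → A ∈ 𝒰 → B ∈ 𝒰) ↔ A ⊆ B := by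
  refine ⟨fun h => ?_, fun hAB 𝒰 h𝒰 => h𝒰.mem_of_subset hA hB hAB⟩
  by_contra hAB
  obtain ⟨x, hxA, hxB⟩ := Set.not_subset.1 hAB
  obtain ⟨-, b, hbB, hbU⟩ :=
    h _ (lOpen_setOf_inter_nonempty hB.isClosed.isOpen_compl) ⟨hA, x, hxA, hxB⟩
  exact hbU hbB

/-- the specialization order of `(LX, O_{⇒L}(LX))` coincides with
set inclusion. -/
theorem stmt_9 [TopologicalSpace X] [T0Space X] (hX : IsDirectedSpace X)
    (A B : Set X) (hA : InLX A) (hB : InLX B) :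
    (∀ 𝒰 : Set (Set X), LOpen 𝒰 → A ∈ 𝒰 → B ∈ 𝒰) ↔ A ⊆ B :=
  stmt_9_general A B hA hB
end

section
/- Let X be a continuous domain with Scott topology. Then the ⇒_U-convergence topology on UX = {↑F : F nonempty finite ⊆ X} equals the relative Scott topology inherited from the dcpo Q(X) of nonempty compact saturated subsets of X ordered by reverse inclusion: O_{⇒U}(UX) = σ(Q(X))|_{UX}. -/
/-!
Both topologies are compared through the intersection `⋂ ℱ` of a directed family `ℱ ⊆ UX`.
The Scott topology of a continuous domain is well-filtered (by the topological Rudin lemma), so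
`⋂ ℱ` is compact saturated and is the supremum of `ℱ` in `Q(X)`; since `ℱ ⇒_U ↑F` forces
`⋂ ℱ ⊆ ↑F`, relatively Scott-open sets are `⇒_U`-open. Conversely, a `⇒_U`-open `𝒰` extends to the
Scott-open family of all `K ∈ Q(X)` contained in a member of `𝒰`: if a filtered `𝒦 ⊆ Q(X)` has
`⋂ 𝒦 ⊆ A ∈ 𝒰`, the up-closures `↑E` of the finite sets `E` with `K ⊆ ↟E` for some `K ∈ 𝒦`
`⇒_U`-converge to `A`, so one of them lies in `𝒰`.
-/

variable {X : Type*}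

/-- Up-closure with respect to the specialization order. -/
def ucl [TopologicalSpace X] (F : Set X) : Set X := {x | ∃ a ∈ F, sle a x}

/-- Membership in `UX`: up-closures of nonempty finite sets. -/
def InUX [TopologicalSpace X] (A : Set X) : Prop :=
  ∃ F : Finset X, F.Nonempty ∧ A = ucl (F : Set X)

/-- A family of elements of `UX`, directed with respect to reverse inclusion. -/
def UDir [TopologicalSpace X] (ℱ : Set (Set X)) : Prop :=
  (∀ B ∈ ℱ, InUX B) ∧ ℱ.Nonempty ∧ ∀ A ∈ ℱ, ∀ B ∈ ℱ, ∃ C ∈ ℱ, C ⊆ A ∧ C ⊆ B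

/-- The convergence `ℱ ⇒_U ↑F`. -/
def UConv [TopologicalSpace X] (ℱ : Set (Set X)) (A : Set X) : Prop :=
  UDir ℱ ∧ ∃ F : Finset X, F.Nonempty ∧ A = ucl (F : Set X) ∧
    ∃ (n : ℕ) (D : Fin n → Set X),
      (∀ i, ∃ a ∈ F, DConv (D i) a) ∧
      (∀ a ∈ F, ∃ i, DConv (D i) a) ∧
      (∀ d : Fin n → X, (∀ i, d i ∈ D i) → ∃ B ∈ ℱ, B ⊆ ⋃ i, ucl {d i})

/-- `⇒_U`-convergence open subsets of `UX`. -/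
def UOpen [TopologicalSpace X] (𝒰 : Set (Set X)) : Prop :=
  (∀ A ∈ 𝒰, InUX A) ∧ ∀ ℱ A, UConv ℱ A → A ∈ 𝒰 → (ℱ ∩ 𝒰).Nonempty

/-- Scott-open subsets of a preordered set. -/
def ScottOpens [Preorder X] (U : Set X) : Prop :=
  IsUpperSet U ∧ ∀ D : Set X, D.Nonempty → DirectedOn (· ≤ ·) D →
    ∀ a, IsLUB D a → a ∈ U → (D ∩ U).Nonempty

/-- Scott-closed subsets. -/
def ScottClosedSet [Preorder X] (A : Set X) : Prop :=
  IsLowerSet A ∧ ∀ D : Set X, D ⊆ A → D.Nonempty → DirectedOn (· ≤ ·) D →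
    ∀ a, IsLUB D a → a ∈ A

/-- Nonempty Scott-closed set (element of `C(P)`). -/
def IsCl [Preorder X] (A : Set X) : Prop := A.Nonempty ∧ ScottClosedSet A

/-- `S` is the least upper bound in `C(P)` (ordered by inclusion) of the family `𝒟`. -/
def IsLubCl [Preorder X] (𝒟 : Set (Set X)) (S : Set X) : Prop :=
  IsCl S ∧ (∀ A ∈ 𝒟, A ⊆ S) ∧ ∀ T, IsCl T → (∀ A ∈ 𝒟, A ⊆ T) → S ⊆ T

/-- Scott-open family of nonempty Scott-closed sets, i.e. Scott-open subsets of `C(P)`. -/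
def SOC [Preorder X] (𝒲 : Set (Set X)) : Prop :=
  (∀ A ∈ 𝒲, IsCl A) ∧
  (∀ A B, A ∈ 𝒲 → IsCl B → A ⊆ B → B ∈ 𝒲) ∧
  ∀ 𝒟 S, (∀ A ∈ 𝒟, IsCl A) → 𝒟.Nonempty → DirectedOn (· ⊆ ·) 𝒟 →
    IsLubCl 𝒟 S → S ∈ 𝒲 → (𝒟 ∩ 𝒲).Nonempty

/-- The way-below relation. -/
def wayBelow [Preorder X] (y x : X) : Prop :=
  ∀ D : Set X, D.Nonempty → DirectedOn (· ≤ ·) D → ∀ a, IsLUB D a → x ≤ a → ∃ d ∈ D, y ≤ d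

/-- A continuous domain: a dcpo in which every element is the directed supremum
of the elements way below it. -/
def IsContinuousDomain (X : Type*) [Preorder X] : Prop :=
  (∀ D : Set X, D.Nonempty → DirectedOn (· ≤ ·) D → ∃ a, IsLUB D a) ∧
  ∀ x : X, {y | wayBelow y x}.Nonempty ∧ DirectedOn (· ≤ ·) {y | wayBelow y x} ∧
    IsLUB {y | wayBelow y x} x

/-- Nonempty compact saturated set. -/
def IsQ {P : Type*} [TopologicalSpace P] (K : Set P) : Prop :=
  K.Nonempty ∧ IsCompact K ∧ K = ⋂₀ {U : Set P | IsOpen U ∧ K ⊆ U}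

/-- `S` is the least upper bound in `Q(X)` (ordered by reverse inclusion)
of the family `𝒦`. -/
def IsLubQ {P : Type*} [TopologicalSpace P] (𝒦 : Set (Set P)) (S : Set P) : Prop :=
  IsQ S ∧ (∀ K ∈ 𝒦, S ⊆ K) ∧ ∀ T, IsQ T → (∀ K ∈ 𝒦, T ⊆ K) → T ⊆ S

/-- Scott-open subsets of `Q(X)` ordered by reverse inclusion. -/
def SOQ {P : Type*} [TopologicalSpace P] (𝒲 : Set (Set P)) : Prop :=
  (∀ K ∈ 𝒲, IsQ K) ∧
  (∀ K K' : Set P, K ∈ 𝒲 → IsQ K' → K' ⊆ K → K' ∈ 𝒲) ∧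
  ∀ 𝒦 S, (∀ K ∈ 𝒦, IsQ K) → 𝒦.Nonempty →
    (∀ A ∈ 𝒦, ∀ B ∈ 𝒦, ∃ C ∈ 𝒦, C ⊆ A ∧ C ⊆ B) →
    IsLubQ 𝒦 S → S ∈ 𝒲 → (𝒦 ∩ 𝒲).Nonempty

open Set Topology

section RudinLemma

variable [TopologicalSpace X]

lemma IsCompact.of_subset_of_forall_isOpen {s t : Set X} (hs : IsCompact s) (hst : s ⊆ t)
    (ht : ∀ U, IsOpen U → s ⊆ U → t ⊆ U) : IsCompact t := by
  refine isCompact_of_finite_subcover fun U hU hcov => ?_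
  obtain ⟨u, hu⟩ := hs.elim_finite_subcover U hU (hst.trans hcov)
  exact ⟨u, ht _ (isOpen_biUnion fun i _ => hU i) hu⟩

/-- The topological Rudin lemma. -/
lemma exists_minimal_isClosed_inter_nonempty {𝒦 : Set (Set X)} (h𝒦 : ∀ K ∈ 𝒦, IsCompact K)
    {C : Set X} (hC : IsClosed C) (hCK : ∀ K ∈ 𝒦, (K ∩ C).Nonempty) :
    ∃ M ⊆ C, Minimal (fun M => IsClosed M ∧ ∀ K ∈ 𝒦, (K ∩ M).Nonempty) M := by
  refine zorn_superset_nonempty _ (fun c hcS hc hcne => ?_) C ⟨hC, hCK⟩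
  refine ⟨⋂₀ c, ⟨isClosed_sInter fun M hM => (hcS hM).1, fun K hK => ?_⟩,
    fun M hM => sInter_subset_of_mem hM⟩
  have : Nonempty c := hcne.to_subtype
  by_contra hempty
  rw [not_nonempty_iff_eq_empty, sInter_eq_iInter] at hempty
  obtain ⟨⟨M, hM⟩, hKM⟩ := (h𝒦 K hK).elim_directed_family_closed (fun M : c => (M : Set X))
    (fun M => (hcS M.2).1) hempty
    (IsChain.directedOn (r := fun A B : Set X => B ⊆ A) hc.symm).directed_val
  exact (not_nonempty_iff_eq_empty.2 hKM) ((hcS hM).2 K hK)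

lemma Minimal.exists_inter_subset_of_isOpen {𝒦 : Set (Set X)} {M V : Set X}
    (hM : Minimal (fun M => IsClosed M ∧ ∀ K ∈ 𝒦, (K ∩ M).Nonempty) M) (hV : IsOpen V)
    (hMV : (M ∩ V).Nonempty) : ∃ K ∈ 𝒦, K ∩ M ⊆ V := by
  by_contra! h
  have hsmaller : IsClosed (M ∩ Vᶜ) ∧ ∀ K ∈ 𝒦, (K ∩ (M ∩ Vᶜ)).Nonempty :=
    ⟨hM.prop.1.inter hV.isClosed_compl, fun K hK => by
      obtain ⟨x, hx, hxV⟩ := not_subset.1 (h K hK)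
      exact ⟨x, hx.1, hx.2, hxV⟩⟩
  obtain ⟨x, hxM, hxV⟩ := hMV
  exact (hM.2 hsmaller inter_subset_left hxM).2 hxV

end RudinLemma

section WayBelow

variable {P : Type*} [Preorder P] {x y z : P}

lemma wayBelow.le (h : wayBelow y x) : y ≤ x := by
  obtain ⟨d, rfl, hyd⟩ :=
    h {x} (singleton_nonempty x) (directedOn_singleton x) x isLUB_singleton le_rfl
  exact hyd

lemma LE.le.trans_wayBelow (hzy : z ≤ y) (h : wayBelow y x) : wayBelow z x :=
  fun D hne hdir a ha hxa => (h D hne hdir a ha hxa).imp fun _ ⟨hd, hyd⟩ => ⟨hd, hzy.trans hyd⟩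

lemma wayBelow.trans_le (h : wayBelow z y) (hyx : y ≤ x) : wayBelow z x :=
  fun D hne hdir a ha hxa => h D hne hdir a ha (hyx.trans hxa)

lemma IsContinuousDomain.le_of_forall_wayBelow (hP : IsContinuousDomain P)
    (h : ∀ z, wayBelow z y → z ≤ x) : y ≤ x :=
  (hP.2 y).2.2.2 h

/-- Interpolation: `{w | ∃ y, w ≪ y ≪ x}` is directed with supremum `x`. -/
lemma IsContinuousDomain.exists_wayBelow_wayBelow (hP : IsContinuousDomain P)
    (h : wayBelow z x) : ∃ y, wayBelow z y ∧ wayBelow y x := by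
  set D := {w : P | ∃ y, wayBelow w y ∧ wayBelow y x}
  have hne : D.Nonempty := by
    obtain ⟨y, hy⟩ := (hP.2 x).1
    obtain ⟨w, hw⟩ := (hP.2 y).1
    exact ⟨w, y, hw, hy⟩
  have hdir : DirectedOn (· ≤ ·) D := by
    rintro w₁ ⟨y₁, hw₁, hy₁⟩ w₂ ⟨y₂, hw₂, hy₂⟩
    obtain ⟨y, hy, h₁, h₂⟩ := (hP.2 x).2.1 y₁ hy₁ y₂ hy₂
    obtain ⟨w, hw, hw₁w, hw₂w⟩ := (hP.2 y).2.1 w₁ (hw₁.trans_le h₁) w₂ (hw₂.trans_le h₂)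
    exact ⟨w, ⟨y, hw, hy⟩, hw₁w, hw₂w⟩
  have hlub : IsLUB D x :=
    ⟨fun w ⟨y, hw, hy⟩ => hw.le.trans hy.le, fun u hu =>
      hP.le_of_forall_wayBelow fun y hy => hP.le_of_forall_wayBelow fun w hw => hu ⟨y, hw, hy⟩⟩
  obtain ⟨w, ⟨y, hwy, hyx⟩, hzw⟩ := h D hne hdir x hlub le_rfl
  exact ⟨y, hzw.trans_wayBelow hwy, hyx⟩

/-- `↟E` in domain-theoretic notation. -/
def wayAbove (E : Set P) : Set P := ⋃ e ∈ E, {x | wayBelow e x}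

lemma mem_wayAbove {E : Set P} : x ∈ wayAbove E ↔ ∃ e ∈ E, wayBelow e x := by
  simp [wayAbove]

lemma wayAbove_subset_upperClosure (E : Set P) : wayAbove E ⊆ upperClosure E := fun _ hx =>
  (mem_wayAbove.1 hx).imp fun _ ⟨he, hex⟩ => ⟨he, hex.le⟩

end WayBelow

section Scott

variable {P : Type*} [Preorder P] [TopologicalSpace P]

lemma isScott_of_isOpen_iff (h : ∀ U : Set P, IsOpen U ↔ ScottOpens U) : IsScott P univ := by
  refine ⟨TopologicalSpace.ext (funext fun U => propext ?_)⟩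
  rw [h U, @IsScott.isOpen_iff_isUpperSet_and_dirSupInaccOn P univ _ (scott P univ) U
    (@IsScott.mk P univ _ (scott P univ) rfl), dirSupInaccOn_univ]
  rfl

variable [IsScott P univ] {x y : P} {s K : Set P}

lemma sle_iff_le : sle x y ↔ x ≤ y := by
  simp [sle]

lemma ucl_eq_upperClosure (s : Set P) : ucl s = upperClosure s := by
  ext x
  simp [ucl, sle_iff_le]

lemma ucl_subset_of_isUpperSet {t : Set P} (hst : s ⊆ t) (ht : IsUpperSet t) : ucl s ⊆ t := by
  rw [ucl_eq_upperClosure]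
  exact upperClosure_min hst ht

lemma isUpperSet_ucl (s : Set P) : IsUpperSet (ucl s) := by
  rw [ucl_eq_upperClosure]
  exact (upperClosure s).upper

lemma ucl_singleton (x : P) : ucl {x} = Ici x := by
  simp [ucl_eq_upperClosure]

lemma isCompact_upperClosure (hs : IsCompact s) : IsCompact (upperClosure s : Set P) :=
  hs.of_subset_of_forall_isOpen subset_upperClosure fun _ hU hsU =>
    upperClosure_min hsU (IsScott.isUpperSet_of_isOpen (D := univ) hU)

lemma IsUpperSet.eq_sInter_isOpen (hK : IsUpperSet K) : K = ⋂₀ {U | IsOpen U ∧ K ⊆ U} := by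
  refine (subset_sInter fun U hU => hU.2).antisymm fun x hx => ?_
  by_contra hxK
  have hKx : K ⊆ (Iic x)ᶜ := fun k hk hkx => hxK (hK hkx hk)
  exact mem_sInter.1 hx _ ⟨isClosed_Iic.isOpen_compl, hKx⟩ le_rfl

lemma isQ_iff : IsQ K ↔ K.Nonempty ∧ IsCompact K ∧ IsUpperSet K := by
  refine ⟨fun ⟨hne, hc, hsat⟩ => ⟨hne, hc, ?_⟩,
    fun ⟨hne, hc, hup⟩ => ⟨hne, hc, hup.eq_sInter_isOpen⟩⟩
  rw [hsat]
  exact isUpperSet_sInter fun U hU => IsScott.isUpperSet_of_isOpen (D := univ) hU.1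

lemma isQ_Ici (x : P) : IsQ (Ici x) :=
  isQ_iff.2 ⟨nonempty_Ici, by simpa using isCompact_upperClosure (isCompact_singleton (x := x)),
    isUpperSet_Ici x⟩

lemma InUX.isQ {A : Set P} (hA : InUX A) : IsQ A := by
  obtain ⟨F, hF, rfl⟩ := hA
  rw [ucl_eq_upperClosure]
  exact isQ_iff.2 ⟨hF.to_set.mono subset_upperClosure,
    isCompact_upperClosure F.finite_toSet.isCompact, (upperClosure _).upper⟩

lemma IsOpen.dirSupInacc {U : Set P} (hU : IsOpen U) : DirSupInacc U :=
  dirSupInaccOn_univ.1 (IsScott.isOpen_iff_isUpperSet_and_dirSupInaccOn.1 hU).2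

lemma DConv.exists_mem {D U : Set P} (h : DConv D x) (hU : IsOpen U) (hx : x ∈ U) :
    ∃ d ∈ D, d ∈ U := by
  obtain ⟨d, hd, htail⟩ := h.2 U hU hx
  exact ⟨d, hd, htail d hd (sle_iff_le.2 le_rfl)⟩

end Scott

section ContinuousDomain

variable {P : Type*} [Preorder P] [TopologicalSpace P] [IsScott P univ]
  (hP : IsContinuousDomain P)
include hP

lemma isOpen_setOf_wayBelow (d : P) : IsOpen {x | wayBelow d x} := by
  refine IsScott.isOpen_iff_isUpperSet_and_dirSupInaccOn.2
    ⟨fun _ _ hab hd => hd.trans_le hab, dirSupInaccOn_univ.2 fun D hne hdir a ha hda => ?_⟩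
  obtain ⟨e, hde, hea⟩ := hP.exists_wayBelow_wayBelow hda
  obtain ⟨z, hz, hez⟩ := hea D hne hdir a ha le_rfl
  exact ⟨z, hz, hde.trans_le hez⟩

lemma isOpen_wayAbove (E : Set P) : IsOpen (wayAbove E) :=
  isOpen_biUnion fun d _ => isOpen_setOf_wayBelow hP d

lemma exists_wayBelow_mem_of_isOpen {U : Set P} {x : P} (hU : IsOpen U) (hx : x ∈ U) :
    ∃ y, wayBelow y x ∧ y ∈ U :=
  hU.dirSupInacc (hP.2 x).1 (hP.2 x).2.1 (hP.2 x).2.2 hx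

lemma dConv_setOf_wayBelow (x : P) : DConv {y | wayBelow y x} x := by
  refine ⟨⟨(hP.2 x).1, fun a ha b hb => ?_⟩, fun U hU hx => ?_⟩
  · obtain ⟨c, hc, hac, hbc⟩ := (hP.2 x).2.1 a ha b hb
    exact ⟨c, hc, sle_iff_le.2 hac, sle_iff_le.2 hbc⟩
  · obtain ⟨d, hdx, hdU⟩ := exists_wayBelow_mem_of_isOpen hP hU hx
    exact ⟨d, hdx, fun e _ hde =>
      IsScott.isUpperSet_of_isOpen (D := univ) hU (sle_iff_le.1 hde) hdU⟩

/-- The approximants of a minimal closed set `M` meeting every member of a filtered family `𝒦`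
form a directed set, because `M` meets each open `↟d` only inside some `K ∈ 𝒦`; its supremum lies
in `M` and above all of `M`, hence in every (upper) `K`. -/
lemma Minimal.inter_sInter_nonempty {𝒦 : Set (Set P)} (hne : 𝒦.Nonempty)
    (hdir : DirectedOn (· ⊇ ·) 𝒦) (hup : ∀ K ∈ 𝒦, IsUpperSet K) {M : Set P}
    (hM : Minimal (fun M => IsClosed M ∧ ∀ K ∈ 𝒦, (K ∩ M).Nonempty) M) :
    (M ∩ ⋂₀ 𝒦).Nonempty := by
  obtain ⟨hMc, hMK⟩ := hM.prop
  set D := {d : P | ∃ a ∈ M, wayBelow d a}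
  have hDM : D ⊆ M := fun d ⟨a, ha, hda⟩ => IsScott.isLowerSet_of_isClosed hMc hda.le ha
  have hDne : D.Nonempty := by
    obtain ⟨K, hK⟩ := hne
    obtain ⟨a, -, ha⟩ := hMK K hK
    obtain ⟨d, hd⟩ := (hP.2 a).1
    exact ⟨d, a, ha, hd⟩
  have hDdir : DirectedOn (· ≤ ·) D := by
    rintro d₁ ⟨a₁, ha₁, hd₁⟩ d₂ ⟨a₂, ha₂, hd₂⟩
    obtain ⟨K₁, hK₁, hK₁M⟩ := hM.exists_inter_subset_of_isOpen (isOpen_setOf_wayBelow hP d₁)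
      ⟨a₁, ha₁, hd₁⟩
    obtain ⟨K₂, hK₂, hK₂M⟩ := hM.exists_inter_subset_of_isOpen (isOpen_setOf_wayBelow hP d₂)
      ⟨a₂, ha₂, hd₂⟩
    obtain ⟨K, hK, hK₁K, hK₂K⟩ := hdir K₁ hK₁ K₂ hK₂
    obtain ⟨c, hcK, hcM⟩ := hMK K hK
    obtain ⟨d, hd, hd₁d, hd₂d⟩ :=
      (hP.2 c).2.1 d₁ (hK₁M ⟨hK₁K hcK, hcM⟩) d₂ (hK₂M ⟨hK₂K hcK, hcM⟩)
    exact ⟨d, ⟨c, hcM, hd⟩, hd₁d, hd₂d⟩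
  obtain ⟨x, hx⟩ := hP.1 D hDne hDdir
  have hMx : ∀ a ∈ M, a ≤ x := fun a ha => hP.le_of_forall_wayBelow fun d hd => hx.1 ⟨a, ha, hd⟩
  refine ⟨x, IsScott.dirSupClosed_of_isClosed hMc hDM hDne hDdir hx, mem_sInter.2 fun K hK => ?_⟩
  obtain ⟨k, hkK, hkM⟩ := hMK K hK
  exact hup K hK (hMx k hkM) hkK

/-- Well-filteredness of the Scott topology of a continuous domain. -/
lemma exists_mem_subset_of_sInter_subset {𝒦 : Set (Set P)} (hne : 𝒦.Nonempty)
    (hdir : DirectedOn (· ⊇ ·) 𝒦) (hQ : ∀ K ∈ 𝒦, IsQ K) {U : Set P} (hU : IsOpen U)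
    (hsub : ⋂₀ 𝒦 ⊆ U) : ∃ K ∈ 𝒦, K ⊆ U := by
  by_contra! h
  obtain ⟨M, hMU, hM⟩ := exists_minimal_isClosed_inter_nonempty (fun K hK => (hQ K hK).2.1)
    hU.isClosed_compl fun K hK => (not_subset.1 (h K hK)).imp fun _ => id
  obtain ⟨x, hxM, hx𝒦⟩ :=
    hM.inter_sInter_nonempty hP hne hdir fun K hK => (isQ_iff.1 (hQ K hK)).2.2
  exact hMU hxM (hsub hx𝒦)

lemma isQ_sInter {𝒦 : Set (Set P)} (hne : 𝒦.Nonempty) (hdir : DirectedOn (· ⊇ ·) 𝒦)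
    (hQ : ∀ K ∈ 𝒦, IsQ K) : IsQ (⋂₀ 𝒦) := by
  refine isQ_iff.2 ⟨?_, ?_, isUpperSet_sInter fun K hK => (isQ_iff.1 (hQ K hK)).2.2⟩
  · by_contra hempty
    obtain ⟨K, hK, hKempty⟩ := exists_mem_subset_of_sInter_subset hP hne hdir hQ isOpen_empty
      (not_nonempty_iff_eq_empty.1 hempty).subset
    exact (hQ K hK).1.ne_empty (subset_empty_iff.1 hKempty)
  · refine isCompact_of_finite_subcover fun U hU hcov => ?_
    obtain ⟨K, hK, hKU⟩ :=
      exists_mem_subset_of_sInter_subset hP hne hdir hQ (isOpen_iUnion hU) hcov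
    obtain ⟨u, hu⟩ := (hQ K hK).2.1.elim_finite_subcover U hU hKU
    exact ⟨u, (sInter_subset_of_mem hK).trans hu⟩

lemma exists_finset_subset_of_subset_wayAbove {K T : Set P} (hK : IsCompact K)
    (hKne : K.Nonempty) (hKT : K ⊆ wayAbove T) :
    ∃ E : Finset P, E.Nonempty ∧ ↑E ⊆ T ∧ K ⊆ wayAbove E := by
  obtain ⟨E, hET, hE, hKE⟩ :=
    hK.elim_finite_subcover_image (fun d _ => isOpen_setOf_wayBelow hP d) hKT
  refine ⟨hE.toFinset, ?_, by simpa using hET, by simpa [wayAbove] using hKE⟩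
  obtain ⟨x, hx⟩ := hKne
  obtain ⟨e, he, -⟩ := mem_iUnion₂.1 (hKE hx)
  exact ⟨e, hE.mem_toFinset.2 he⟩

end ContinuousDomain

section UConvergence

variable {P : Type*} [Preorder P] [TopologicalSpace P] [IsScott P univ]

lemma UConv.sInter_subset {ℱ : Set (Set P)} {A : Set P} (h : UConv ℱ A) : ⋂₀ ℱ ⊆ A := by
  obtain ⟨-, F, -, rfl, n, D, hD, -, hcover⟩ := h
  intro x hx
  by_contra hxF
  have hout : ∀ i, ∃ d ∈ D i, d ∈ (Iic x)ᶜ := fun i => by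
    obtain ⟨a, ha, hDa⟩ := hD i
    exact hDa.exists_mem isClosed_Iic.isOpen_compl fun hax => hxF ⟨a, ha, sle_iff_le.2 hax⟩
  choose d hdD hdx using hout
  obtain ⟨B, hB, hBd⟩ := hcover d hdD
  obtain ⟨i, hi⟩ := mem_iUnion.1 (hBd (mem_sInter.1 hx B hB))
  rw [ucl_singleton] at hi
  exact hdx i hi

lemma sInter_subset_of_isLubQ {𝒦 : Set (Set P)} {S : Set P} (hQ : ∀ K ∈ 𝒦, IsQ K)
    (hS : IsLubQ 𝒦 S) : ⋂₀ 𝒦 ⊆ S := fun x hx =>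
  hS.2.2 _ (isQ_Ici x) (fun K hK => (isQ_iff.1 (hQ K hK)).2.2.Ici_subset (mem_sInter.1 hx K hK))
    (mem_Ici.2 le_rfl)

variable (hP : IsContinuousDomain P)
include hP

/-- The `i`-th approximating directed set is `↡aᵢ`, for an enumeration `aᵢ` of `F`. -/
lemma uConv_ucl_of_forall_wayBelow {ℱ : Set (Set P)} (hℱ : UDir ℱ) {F : Finset P}
    (hF : F.Nonempty)
    (h : ∀ d : F → P, (∀ a, wayBelow (d a) a) → ∃ B ∈ ℱ, B ⊆ ⋃ a, Ici (d a)) :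
    UConv ℱ (ucl F) := by
  refine ⟨hℱ, F, hF, rfl, F.card, fun i => {y | wayBelow y (F.equivFin.symm i)},
    fun i => ⟨_, (F.equivFin.symm i).2, dConv_setOf_wayBelow hP _⟩,
    fun a ha => ⟨F.equivFin ⟨a, ha⟩, by simpa using dConv_setOf_wayBelow hP a⟩, fun d hd => ?_⟩
  obtain ⟨B, hB, hBd⟩ := h (d ∘ F.equivFin) fun a => by simpa using hd (F.equivFin a)
  refine ⟨B, hB, hBd.trans ?_⟩
  simp only [ucl_singleton, Function.comp_apply]
  exact (F.equivFin.surjective.iUnion_comp fun i => Ici (d i)).subset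

lemma uConv_singleton {A A' : Set P} (hA : InUX A) (hA' : InUX A') (hAA' : A ⊆ A') :
    UConv {A} A' := by
  obtain ⟨F, hF, rfl⟩ := hA'
  have hdir := directedOn_singleton (r := fun B C : Set P => C ⊆ B) A
  refine uConv_ucl_of_forall_wayBelow hP ⟨fun B hB => hB ▸ hA, singleton_nonempty A, hdir⟩ hF
    fun d hd => ⟨A, rfl, fun x hx => ?_⟩
  obtain ⟨a, ha, hax⟩ := hAA' hx
  exact mem_iUnion.2 ⟨⟨a, ha⟩, (hd ⟨a, ha⟩).le.trans (sle_iff_le.1 hax)⟩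

lemma UOpen.mem_of_subset {𝒰 : Set (Set P)} (h𝒰 : UOpen 𝒰) {A A' : Set P} (hA : InUX A)
    (hAA' : A ⊆ A') (hA' : A' ∈ 𝒰) : A ∈ 𝒰 := by
  obtain ⟨B, rfl, hB⟩ := h𝒰.2 {A} A' (uConv_singleton hP hA (h𝒰.1 A' hA') hAA') hA'
  exact hB

end UConvergence

section ScottOpenExtension

variable {P : Type*} [Preorder P] [TopologicalSpace P]

def finiteApprox (𝒦 : Set (Set P)) : Set (Set P) :=
  {B | ∃ E : Finset P, E.Nonempty ∧ B = ucl E ∧ ∃ K ∈ 𝒦, K ⊆ wayAbove E}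

/-- The up-closure of `𝒰` in `Q(X)`, which is ordered by reverse inclusion. -/
def qUpperClosure (𝒰 : Set (Set P)) : Set (Set P) := {K | IsQ K ∧ ∃ A ∈ 𝒰, K ⊆ A}

variable [IsScott P univ] (hP : IsContinuousDomain P) {𝒦 : Set (Set P)}
include hP

lemma exists_ucl_mem_finiteApprox {K T : Set P} (hK𝒦 : K ∈ 𝒦) (hK : IsQ K)
    (hKT : K ⊆ wayAbove T) : ∃ E : Finset P, ↑E ⊆ T ∧ ucl E ∈ finiteApprox 𝒦 := by
  obtain ⟨E, hE, hET, hKE⟩ := exists_finset_subset_of_subset_wayAbove hP hK.2.1 hK.1 hKT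
  exact ⟨E, hET, E, hE, rfl, K, hK𝒦, hKE⟩

lemma uDir_finiteApprox (hne : 𝒦.Nonempty) (hdir : DirectedOn (· ⊇ ·) 𝒦)
    (hQ : ∀ K ∈ 𝒦, IsQ K) : UDir (finiteApprox 𝒦) := by
  refine ⟨fun B ⟨E, hE, hBE, _⟩ => ⟨E, hE, hBE⟩, ?_, ?_⟩
  · obtain ⟨K, hK⟩ := hne
    obtain ⟨E, -, hE⟩ := exists_ucl_mem_finiteApprox hP hK (hQ K hK) (T := univ) fun x _ => by
      obtain ⟨d, hd⟩ := (hP.2 x).1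
      exact mem_wayAbove.2 ⟨d, mem_univ d, hd⟩
    exact ⟨_, hE⟩
  · rintro _ ⟨E₁, -, rfl, K₁, hK₁, hK₁E⟩ _ ⟨E₂, -, rfl, K₂, hK₂, hK₂E⟩
    obtain ⟨K, hK, hKK₁, hKK₂⟩ := hdir K₁ hK₁ K₂ hK₂
    have hKE : K ⊆ wayAbove (ucl E₁ ∩ ucl E₂) := fun x hx => by
      obtain ⟨e₁, he₁, he₁x⟩ := mem_wayAbove.1 (hK₁E (hKK₁ hx))
      obtain ⟨e₂, he₂, he₂x⟩ := mem_wayAbove.1 (hK₂E (hKK₂ hx))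
      obtain ⟨c, hcx, he₁c, he₂c⟩ := (hP.2 x).2.1 e₁ he₁x e₂ he₂x
      exact mem_wayAbove.2 ⟨c, ⟨⟨e₁, he₁, sle_iff_le.2 he₁c⟩, ⟨e₂, he₂, sle_iff_le.2 he₂c⟩⟩, hcx⟩
    obtain ⟨E, hE, hEapprox⟩ := exists_ucl_mem_finiteApprox hP hK (hQ K hK) hKE
    exact ⟨_, hEapprox, ucl_subset_of_isUpperSet (hE.trans inter_subset_left) (isUpperSet_ucl _),
      ucl_subset_of_isUpperSet (hE.trans inter_subset_right) (isUpperSet_ucl _)⟩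

/-- If `⋂ 𝒦 ⊆ ↑F` and `dₐ ≪ a` for `a ∈ F`, then `⋂ 𝒦` lies in the open set `↟{dₐ}`, hence so
does some `K ∈ 𝒦` by well-filteredness, and a finite subcover of `K` gives a member of
`finiteApprox 𝒦` below `⋃ ↑dₐ`. -/
lemma uConv_finiteApprox (hne : 𝒦.Nonempty) (hdir : DirectedOn (· ⊇ ·) 𝒦)
    (hQ : ∀ K ∈ 𝒦, IsQ K) {F : Finset P} (hF : F.Nonempty) (hsub : ⋂₀ 𝒦 ⊆ ucl F) :
    UConv (finiteApprox 𝒦) (ucl F) := by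
  refine uConv_ucl_of_forall_wayBelow hP (uDir_finiteApprox hP hne hdir hQ) hF fun d hd => ?_
  have h𝒦d : ⋂₀ 𝒦 ⊆ wayAbove (range d) := fun x hx => by
    obtain ⟨a, ha, hax⟩ := hsub hx
    exact mem_wayAbove.2 ⟨_, mem_range_self ⟨a, ha⟩, (hd ⟨a, ha⟩).trans_le (sle_iff_le.1 hax)⟩
  obtain ⟨K, hK, hKd⟩ :=
    exists_mem_subset_of_sInter_subset hP hne hdir hQ (isOpen_wayAbove hP _) h𝒦d
  obtain ⟨E, hEd, hE⟩ := exists_ucl_mem_finiteApprox hP hK (hQ K hK) hKd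
  refine ⟨_, hE, ucl_subset_of_isUpperSet (hEd.trans ?_)
    (isUpperSet_iUnion fun a => isUpperSet_Ici (d a))⟩
  rintro _ ⟨a, rfl⟩
  exact mem_iUnion.2 ⟨a, mem_Ici.2 le_rfl⟩

lemma UOpen.exists_mem_subset_of_sInter_subset {𝒰 : Set (Set P)} (h𝒰 : UOpen 𝒰)
    (hne : 𝒦.Nonempty) (hdir : DirectedOn (· ⊇ ·) 𝒦) (hQ : ∀ K ∈ 𝒦, IsQ K) {A : Set P}
    (hA : A ∈ 𝒰) (hsub : ⋂₀ 𝒦 ⊆ A) : ∃ K ∈ 𝒦, ∃ A' ∈ 𝒰, K ⊆ A' := by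
  obtain ⟨F, hF, rfl⟩ := h𝒰.1 A hA
  obtain ⟨_, ⟨E, -, rfl, K, hK, hKE⟩, hE𝒰⟩ :=
    h𝒰.2 _ _ (uConv_finiteApprox hP hne hdir hQ hF hsub) hA
  refine ⟨K, hK, _, hE𝒰, hKE.trans ?_⟩
  rw [ucl_eq_upperClosure]
  exact wayAbove_subset_upperClosure _

lemma UOpen.soq_qUpperClosure {𝒰 : Set (Set P)} (h𝒰 : UOpen 𝒰) :
    SOQ (qUpperClosure 𝒰) := by
  refine ⟨fun K hK => hK.1, fun K K' ⟨_, A, hA, hKA⟩ hK' hK'K => ⟨hK', A, hA, hK'K.trans hKA⟩,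
    fun 𝒦 S hQ hne hdir hS ⟨_, A, hA, hSA⟩ => ?_⟩
  obtain ⟨K, hK, A', hA', hKA'⟩ := h𝒰.exists_mem_subset_of_sInter_subset hP hne hdir hQ hA
    ((sInter_subset_of_isLubQ hQ hS).trans hSA)
  exact ⟨K, hK, hQ K hK, A', hA', hKA'⟩

lemma UOpen.eq_setOf_mem_qUpperClosure_inUX {𝒰 : Set (Set P)} (h𝒰 : UOpen 𝒰) :
    𝒰 = {A | A ∈ qUpperClosure 𝒰 ∧ InUX A} := by
  ext A
  refine ⟨fun hA => ⟨⟨(h𝒰.1 A hA).isQ, A, hA, subset_rfl⟩, h𝒰.1 A hA⟩, ?_⟩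
  rintro ⟨⟨-, A', hA', hAA'⟩, hA⟩
  exact h𝒰.mem_of_subset hP hA hAA' hA'

/-- A `⇒_U`-limit `A` of `ℱ` contains `⋂ ℱ`, which is the supremum of `ℱ` in `Q(X)`. -/
lemma SOQ.uOpen_setOf_mem_inUX {𝒲 : Set (Set P)} (h𝒲 : SOQ 𝒲) :
    UOpen {A | A ∈ 𝒲 ∧ InUX A} := by
  refine ⟨fun A hA => hA.2, fun ℱ A hconv hA => ?_⟩
  obtain ⟨hUX, hne, hdir⟩ := hconv.1
  have hQ : ∀ B ∈ ℱ, IsQ B := fun B hB => (hUX B hB).isQ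
  have hlub : IsLubQ ℱ (⋂₀ ℱ) := ⟨isQ_sInter hP hne hdir hQ, fun _ => sInter_subset_of_mem,
    fun _ _ => subset_sInter⟩
  obtain ⟨B, hB, hB𝒲⟩ := h𝒲.2.2 ℱ _ hQ hne hdir hlub
    (h𝒲.2.1 A _ hA.1 hlub.1 hconv.sInter_subset)
  exact ⟨B, hB, hB𝒲, hUX B hB⟩

end ScottOpenExtension

/-- for a continuous domain `X` with the Scott topology, the
`⇒_U`-topology on `UX` equals the relative Scott topology inherited from
`Q(X)` ordered by reverse inclusion. -/
theorem stmt_16 {P : Type*} [PartialOrder P] [TopologicalSpace P]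
    (hscott : ∀ U : Set P, IsOpen U ↔ ScottOpens U)
    (hcont : IsContinuousDomain P) :
    (∀ 𝒰 : Set (Set P), UOpen 𝒰 →
        ∃ 𝒲 : Set (Set P), SOQ 𝒲 ∧ 𝒰 = {A | A ∈ 𝒲 ∧ InUX A}) ∧
    (∀ 𝒲 : Set (Set P), SOQ 𝒲 → UOpen {A | A ∈ 𝒲 ∧ InUX A}) := by
  have := isScott_of_isOpen_iff hscott
  exact ⟨fun 𝒰 h𝒰 => ⟨qUpperClosure 𝒰, h𝒰.soq_qUpperClosure hcont,
      h𝒰.eq_setOf_mem_qUpperClosure_inUX hcont⟩,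
    fun 𝒲 h𝒲 => h𝒲.uOpen_setOf_mem_inUX hcont⟩
end
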